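/- arXiv:2012.04483 — 7 statements merged into one kernel-verified Lean document; each statement's English description precedes it below -/
import Mathlib

section
/- For all integers K and t with 1 ≤ t < K, the MN PDA is a (K, C(K,t), C(K−1,t−1), C(K,t+1)) placement delivery array: every column contains exactly C(K−1,t−1) stars, every integer in {1,…,C(K,t+1)} occurs at least once in the array, and whenever two distinct entries are equal to the same integer they lie in distinct rows and distinct columns and the two cross positions (same row as one, same column as the other) are stars. -/
namespace Finset

variable {α : Type*} [DecidableEq α]

lemma card_filter_mem_powersetCard {s : Finset α} {a : α} {n : ℕ} (ha : a ∈ s) (hn : 1 ≤ n) :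
    #((s.powersetCard n).filter (a ∈ ·)) = (#s - 1).choose (n - 1) := by
  simpa only [singleton_subset_iff, card_singleton] using
    card_filter_powersetCard_subset {a} s n (singleton_subset_iff.mpr ha) hn

lemma insert_mem_powersetCard_succ {s u : Finset α} {a : α} {n : ℕ} (ha : a ∈ s) (hau : a ∉ u)
    (hu : u ∈ s.powersetCard n) : insert a u ∈ s.powersetCard (n + 1) := by
  rw [mem_powersetCard] at hu ⊢
  exact ⟨insert_subset ha hu.1, by rw [card_insert_of_notMem hau, hu.2]⟩

lemma ne_and_mem_of_insert_eq_insert {s u : Finset α} {a b : α} (has : a ∉ s) (hbu : b ∉ u)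
    (hne : (s, a) ≠ (u, b)) (h : insert a s = insert b u) :
    s ≠ u ∧ a ≠ b ∧ b ∈ s ∧ a ∈ u := by
  have hab : a ≠ b := by
    rintro rfl
    refine hne (Prod.ext ?_ rfl)
    rw [← erase_insert has, ← erase_insert hbu, h]
  have hau : a ∈ u := (mem_insert.mp (h ▸ mem_insert_self a s)).resolve_left hab
  have hbs : b ∈ s := (mem_insert.mp (h ▸ mem_insert_self b u)).resolve_left hab.symm
  exact ⟨fun hsu => has (hsu ▸ hau), hab, hbs, hau⟩

end Finset

open Finset

theorem stmt_0_general (K t : ℕ) (ht : 1 ≤ t)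
    (φ : Finset ℕ → ℕ)
    (hφ : Set.BijOn φ {S : Finset ℕ | S ⊆ Finset.Icc 1 K ∧ S.card = t + 1}
      (↑(Finset.Icc 1 (K.choose (t + 1))) : Set ℕ)) :
    -- C1: each column contains exactly C(K-1, t-1) stars
    (∀ k ∈ Finset.Icc 1 K,
      (((Finset.Icc 1 K).powersetCard t).filter (fun T => k ∈ T)).card
        = (K - 1).choose (t - 1)) ∧
    -- C2: every integer in {1,…,C(K,t+1)} occurs at least once
    (∀ s ∈ Finset.Icc 1 (K.choose (t + 1)),
      ∃ T ∈ (Finset.Icc 1 K).powersetCard t, ∃ k ∈ Finset.Icc 1 K,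
        k ∉ T ∧ φ (insert k T) = s) ∧
    -- C3: equal integer entries lie in distinct rows and columns, with stars at the
    -- two cross positions
    (∀ T1 ∈ (Finset.Icc 1 K).powersetCard t, ∀ T2 ∈ (Finset.Icc 1 K).powersetCard t,
      ∀ k1 ∈ Finset.Icc 1 K, ∀ k2 ∈ Finset.Icc 1 K,
        k1 ∉ T1 → k2 ∉ T2 → (T1, k1) ≠ (T2, k2) →
        φ (insert k1 T1) = φ (insert k2 T2) →
        T1 ≠ T2 ∧ k1 ≠ k2 ∧ k2 ∈ T1 ∧ k1 ∈ T2) := by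
  have hdomain : ∀ T ∈ (Icc 1 K).powersetCard t, ∀ k ∈ Icc 1 K, k ∉ T →
      insert k T ∈ {S : Finset ℕ | S ⊆ Icc 1 K ∧ S.card = t + 1} := fun T hT k hk hkT =>
    mem_powersetCard.mp (insert_mem_powersetCard_succ hk hkT hT)
  refine ⟨fun k hk => ?_, fun s hs => ?_, ?_⟩
  · rw [card_filter_mem_powersetCard hk ht, Nat.card_Icc, Nat.add_sub_cancel]
  · obtain ⟨S, ⟨hSK, hScard⟩, rfl⟩ := hφ.surjOn (mem_coe.mpr hs)
    obtain ⟨k, T, hkT, rfl, hTcard⟩ := card_eq_succ.mp hScard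
    exact ⟨T, mem_powersetCard.mpr ⟨(subset_insert k T).trans hSK, hTcard⟩,
      k, hSK (mem_insert_self k T), hkT, rfl⟩
  · intro T1 hT1 T2 hT2 k1 hk1 k2 hk2 hk1T1 hk2T2 hne heq
    exact ne_and_mem_of_insert_eq_insert hk1T1 hk2T2 hne
      (hφ.injOn (hdomain T1 hT1 k1 hk1 hk1T1) (hdomain T2 hT2 k2 hk2 hk2T2) heq)

/-- The MN PDA is a `(K, C(K,t), C(K-1,t-1), C(K,t+1))` placement delivery
array.  Rows are indexed by the `t`-element subsets `T` of `{1,…,K}`, columns by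
`k ∈ {1,…,K}`; the entry at `(T,k)` is a star iff `k ∈ T`, and otherwise it is the
integer `φ (insert k T)`, where `φ` is a bijection from the `(t+1)`-element subsets of
`{1,…,K}` onto `{1,…,C(K,t+1)}`. -/
theorem stmt_0 (K t : ℕ) (ht : 1 ≤ t) (htK : t < K)
    (φ : Finset ℕ → ℕ)
    (hφ : Set.BijOn φ {S : Finset ℕ | S ⊆ Finset.Icc 1 K ∧ S.card = t + 1}
      (↑(Finset.Icc 1 (K.choose (t + 1))) : Set ℕ)) :
    -- C1: each column contains exactly C(K-1, t-1) stars
    (∀ k ∈ Finset.Icc 1 K,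
      (((Finset.Icc 1 K).powersetCard t).filter (fun T => k ∈ T)).card
        = (K - 1).choose (t - 1)) ∧
    -- C2: every integer in {1,…,C(K,t+1)} occurs at least once
    (∀ s ∈ Finset.Icc 1 (K.choose (t + 1)),
      ∃ T ∈ (Finset.Icc 1 K).powersetCard t, ∃ k ∈ Finset.Icc 1 K,
        k ∉ T ∧ φ (insert k T) = s) ∧
    -- C3: equal integer entries lie in distinct rows and columns, with stars at the
    -- two cross positions
    (∀ T1 ∈ (Finset.Icc 1 K).powersetCard t, ∀ T2 ∈ (Finset.Icc 1 K).powersetCard t,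
      ∀ k1 ∈ Finset.Icc 1 K, ∀ k2 ∈ Finset.Icc 1 K,
        k1 ∉ T1 → k2 ∉ T2 → (T1, k1) ≠ (T2, k2) →
        φ (insert k1 T1) = φ (insert k2 T2) →
        T1 ≠ T2 ∧ k1 ≠ k2 ∧ k2 ∈ T1 ∧ k1 ∈ T2) :=
  stmt_0_general K t ht φ hφ
end

section
/- Let K', t, L be positive integers with t < K', and let P be the MN PDA on K' columns with parameter t. Then: (C4) every row of P contains exactly t stars; and (C5) whenever two distinct entries P(T1,k1) and P(T2,k2) are equal to the same integer (equivalently, k1 ∉ T1, k2 ∉ T2 and T1 ∪ {k1} = T2 ∪ {k2}), writing i1 for the rank of k1 in the increasingly ordered (t+1)-element set T1 ∪ {k1} and i2 for the rank of k2 in T2 ∪ {k2}, one has k1 + (i1−1)(L−1) ∈ U_{T2} and k2 + (i2−1)(L−1) ∈ U_{T1}. -/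
/-- The rank of `x` in a finite set of naturals: the number of elements of `s`
that are `≤ x`.  For `x ∈ s` this is the (1-based) position of `x` in the
increasing enumeration of `s`. -/
def rankIn (s : Finset ℕ) (x : ℕ) : ℕ := (s.filter (fun y => y ≤ x)).card

/-- For a finite set `A = {A[1] < … < A[t]}` of naturals,
`Uset L A = ⋃_{h=1}^{t} {A[h]+(h−1)(L−1), …, A[h]+h(L−1)}`. -/
def Uset (L : ℕ) (A : Finset ℕ) : Finset ℕ :=
  A.biUnion (fun a =>
    Finset.Icc (a + (rankIn A a - 1) * (L - 1)) (a + rankIn A a * (L - 1)))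

lemma mem_Uset_aux {L : ℕ} {s : Finset ℕ} {x y : ℕ} (hx : x ∈ s) (hy : y ∉ s) :
    x + (rankIn (insert y s) x - 1) * (L - 1) ∈ Uset L s := by
  have hxy : y ≠ x := fun h => hy (h ▸ hx)
  have hr1 : 1 ≤ rankIn s x :=
    Finset.card_pos.mpr ⟨x, Finset.mem_filter.mpr ⟨hx, le_refl x⟩⟩
  have hins : rankIn (insert y s) x = rankIn s x + (if y ≤ x then 1 else 0) := by
    unfold rankIn
    rw [Finset.filter_insert]
    split
    · rw [Finset.card_insert_of_notMem (fun h => hy (Finset.mem_filter.mp h).1)]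
    · simp
  refine Finset.mem_biUnion.mpr ⟨x, hx, ?_⟩
  rw [Finset.mem_Icc, hins]
  have hmul : (rankIn s x - 1) * (L - 1) ≤ rankIn s x * (L - 1) :=
    Nat.mul_le_mul_right _ (Nat.sub_le _ _)
  split_ifs with h <;> simp only [Nat.add_sub_cancel, Nat.add_zero] <;> omega

/-- The MN PDA on `K'` columns with parameter `t` (rows indexed by the
`t`-element subsets `T` of `{1,…,K'}`, star at `(T,k)` iff `k ∈ T`, and integer entry
`φ(T ∪ {k})` otherwise) satisfies conditions C4 and C5.  Two distinct non-star entries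
`(T1,k1)`, `(T2,k2)` carry the same integer precisely when `k1 ∉ T1`, `k2 ∉ T2` and
`T1 ∪ {k1} = T2 ∪ {k2}`. -/
theorem stmt_1 (K' t L : ℕ) (ht : 1 ≤ t) (htK : t < K') (hL : 1 ≤ L) :
    -- C4: every row contains exactly t stars
    (∀ T ∈ (Finset.Icc 1 K').powersetCard t,
      ((Finset.Icc 1 K').filter (fun k => k ∈ T)).card = t) ∧
    -- C5
    (∀ T1 ∈ (Finset.Icc 1 K').powersetCard t, ∀ T2 ∈ (Finset.Icc 1 K').powersetCard t,
      ∀ k1 ∈ Finset.Icc 1 K', ∀ k2 ∈ Finset.Icc 1 K',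
        k1 ∉ T1 → k2 ∉ T2 → (T1, k1) ≠ (T2, k2) →
        insert k1 T1 = insert k2 T2 →
        k1 + (rankIn (insert k1 T1) k1 - 1) * (L - 1) ∈ Uset L T2 ∧
        k2 + (rankIn (insert k2 T2) k2 - 1) * (L - 1) ∈ Uset L T1) := by
  constructor
  · intro T hT
    obtain ⟨hsub, hcard⟩ := Finset.mem_powersetCard.mp hT
    rw [Finset.filter_mem_eq_inter, Finset.inter_eq_right.mpr hsub, hcard]
  · intro T1 hT1 T2 hT2 k1 hk1 k2 hk2 hn1 hn2 hne heq
    have hk12 : k1 ≠ k2 := by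
      intro h
      subst h
      apply hne
      have : T1 = T2 := by
        have := congrArg (fun s => Finset.erase s k1) heq
        simpa [Finset.erase_insert hn1, Finset.erase_insert hn2] using this
      rw [this]
    have hk1T2 : k1 ∈ T2 := by
      have : k1 ∈ insert k2 T2 := heq ▸ Finset.mem_insert_self k1 T1
      exact (Finset.mem_insert.mp this).resolve_left hk12
    have hk2T1 : k2 ∈ T1 := by
      have : k2 ∈ insert k1 T1 := heq ▸ Finset.mem_insert_self k2 T2
      exact (Finset.mem_insert.mp this).resolve_left hk12.symm
    constructor
    · rw [heq]
      exact mem_Uset_aux hk1T2 hn2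
    · rw [← heq]
      exact mem_Uset_aux hk2T1 hn1
end

section
/- Let K', t, L be positive integers with t ≤ K', and set K = K' + t(L−1). Let A be a t-element subset of {1,…,K'} with increasing enumeration A[1] < … < A[t], and define c_h = A[h] + h(L−1) for h ∈ {1,…,t}. Then {c_1,…,c_t} ⊆ {1,…,K}, and for all 1 ≤ h < h' ≤ t one has L ≤ c_{h'} − c_h ≤ K − L; in particular any two distinct elements c, c' of {c_1,…,c_t} satisfy both Mod(c−c', K) ≥ L and Mod(c'−c, K) ≥ L, i.e., they are at cyclic distance at least L in Z/KZ. -/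
/-- `zmod1 b a` is the representative of the integer `b` modulo `a` lying in
`{1, …, a}` (i.e. `Mod(b,a)` in the paper's notation). -/
def zmod1 (b : ℤ) (a : ℕ) : ℤ := if b % (a : ℤ) = 0 then (a : ℤ) else b % (a : ℤ)

lemma gap_aux {n : ℕ} (f : Fin n → ℕ) (hf : StrictMono f) :
    ∀ d (i j : Fin n), (j : ℕ) = (i : ℕ) + d → f i + d ≤ f j := by
  intro d
  induction d with
  | zero => intro i j hij; have : i = j := Fin.ext (by omega); simp [this]
  | succ d ih =>
    intro i j hij
    have hj' : (i : ℕ) + d < n := by omega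
    set j' : Fin n := ⟨(i : ℕ) + d, hj'⟩
    have h1 := ih i j' rfl
    have h2 : f j' < f j := hf (by simp [j', Fin.lt_def]; omega)
    omega

lemma zmod1_pos_of (x : ℤ) (K L : ℕ) (hL : 1 ≤ L) (h1 : (L : ℤ) ≤ x) (h2 : x ≤ (K : ℤ) - L) :
    (L : ℤ) ≤ zmod1 x K := by
  have hx : x % (K : ℤ) = x := Int.emod_eq_of_lt (by omega) (by omega)
  unfold zmod1
  rw [hx, if_neg (by omega)]
  exact h1

lemma zmod1_neg_of (d : ℤ) (K L : ℕ) (hL : 1 ≤ L) (h1 : (L : ℤ) ≤ d) (h2 : d ≤ (K : ℤ) - L) :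
    (L : ℤ) ≤ zmod1 (-d) K := by
  have hx : (-d) % (K : ℤ) = (K : ℤ) - d := by
    have e1 : (-d + (K : ℤ) * 1) % (K : ℤ) = (-d) % (K : ℤ) := Int.add_mul_emod_self_left _ _ _
    have e2 : (-d + (K : ℤ) * 1) % (K : ℤ) = -d + (K : ℤ) * 1 :=
      Int.emod_eq_of_lt (by omega) (by omega)
    omega
  unfold zmod1
  rw [hx, if_neg (by omega)]
  omega


/-- with `K = K' + t(L−1)`, for a `t`-element subset
`A = {A[1] < … < A[t]}` of `{1,…,K'}` and `c_h = A[h] + h(L−1)`, the `c_h` lie in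
`{1,…,K}`, ordered gaps satisfy `L ≤ c_{h'} − c_h ≤ K − L`, and any two distinct
`c`-values are at cyclic distance at least `L` in `ℤ/Kℤ`. -/
theorem stmt_2 (K' t L : ℕ) (ht : 1 ≤ t) (hL : 1 ≤ L) (htK : t ≤ K')
    (K : ℕ) (hK : K = K' + t * (L - 1))
    (A : Finset ℕ) (hA : A ⊆ Finset.Icc 1 K') (hcard : A.card = t)
    (c : Fin t → ℕ)
    (hc : ∀ h : Fin t, c h = A.orderEmbOfFin hcard h + ((h : ℕ) + 1) * (L - 1)) :
    (∀ h : Fin t, c h ∈ Finset.Icc 1 K) ∧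
    (∀ h h' : Fin t, h < h' → L ≤ c h' - c h ∧ c h' - c h ≤ K - L) ∧
    (∀ h h' : Fin t, h ≠ h' →
      (L : ℤ) ≤ zmod1 ((c h : ℤ) - (c h' : ℤ)) K ∧
      (L : ℤ) ≤ zmod1 ((c h' : ℤ) - (c h : ℤ)) K) := by
  set e : Fin t → ℕ := fun i => A.orderEmbOfFin hcard i with he
  have hmono : StrictMono e := (A.orderEmbOfFin hcard).strictMono
  have hce : ∀ h : Fin t, c h = e h + ((h : ℕ) + 1) * (L - 1) := hc
  have hmem : ∀ i : Fin t, 1 ≤ e i ∧ e i ≤ K' := by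
    intro i
    have := hA (A.orderEmbOfFin_mem hcard i)
    simpa [Finset.mem_Icc] using this
  have hlow : ∀ i : Fin t, (i : ℕ) + 1 ≤ e i := by
    intro i
    have h0 : (0 : ℕ) < t := ht
    have := gap_aux e hmono (i : ℕ) ⟨0, h0⟩ i (by simp)
    have := (hmem ⟨0, h0⟩).1
    omega
  have hhigh : ∀ i : Fin t, e i + (t - 1 - (i : ℕ)) ≤ K' := by
    intro i
    have hlt : t - 1 < t := by omega
    have h1 := gap_aux e hmono (t - 1 - (i : ℕ)) i ⟨t - 1, hlt⟩ (by simp; omega)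
    have := (hmem ⟨t - 1, hlt⟩).2
    omega
  have key : ∀ h h' : Fin t, h < h' → L ≤ c h' - c h ∧ c h' - c h ≤ K - L := by
    intro h h' hlt
    have hvlt : (h : ℕ) < (h' : ℕ) := hlt
    set d : ℕ := (h' : ℕ) - (h : ℕ) with hd
    have hgap := gap_aux e hmono d h h' (by omega)
    have hhi := hhigh h'
    have hlo := hlow h
    have hc1 := hce h
    have hc2 := hce h'
    have hd1 : 1 ≤ d := by omega
    have hdt : d ≤ t - 1 := by omega
    have p1 : ((h' : ℕ) + 1) * (L - 1) = ((h : ℕ) + 1) * (L - 1) + d * (L - 1) := by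
      rw [← Nat.add_mul]; congr 1; omega
    have p2 : d * (L - 1) + d * 1 = d * L := by
      rw [← Nat.mul_add]; congr 1; omega
    have p3 : L ≤ d * L := Nat.le_mul_of_pos_left L hd1
    have p4 : d * L ≤ (t - 1) * L := Nat.mul_le_mul_right L hdt
    have p5 : t * (L - 1) + t * 1 = t * L := by
      rw [← Nat.mul_add]; congr 1; omega
    have p6 : (t - 1) * L + 1 * L = t * L := by
      rw [← Nat.add_mul]; congr 1; omega
    constructor <;> omega
  refine ⟨?_, key, ?_⟩
  · intro h
    have hc1 := hce h
    have hmm := hmem h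
    have hh : (h : ℕ) + 1 ≤ t := h.isLt
    have p : ((h : ℕ) + 1) * (L - 1) ≤ t * (L - 1) := Nat.mul_le_mul_right _ hh
    rw [Finset.mem_Icc]
    omega
  · intro h h' hne
    have hLK : L ≤ K := by
      have p5 : t * (L - 1) + t * 1 = t * L := by
        rw [← Nat.mul_add]; congr 1; omega
      have p3 : 1 * L ≤ t * L := Nat.mul_le_mul_right L ht
      omega
    rcases lt_trichotomy h h' with hlt | heq | hlt
    · obtain ⟨k1, k2⟩ := key h h' hlt
      have hle : c h ≤ c h' := by omega
      have hcast : ((c h' - c h : ℕ) : ℤ) = (c h' : ℤ) - (c h : ℤ) := by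
        push_cast [Nat.cast_sub hle]; ring
      have hz1 : (L : ℤ) ≤ ((c h' : ℤ) - (c h : ℤ)) := by omega
      have hz2 : ((c h' : ℤ) - (c h : ℤ)) ≤ (K : ℤ) - L := by omega
      refine ⟨?_, zmod1_pos_of _ K L hL hz1 hz2⟩
      have := zmod1_neg_of ((c h' : ℤ) - (c h : ℤ)) K L hL hz1 hz2
      simpa [neg_sub] using this
    · exact absurd heq hne
    · obtain ⟨k1, k2⟩ := key h' h hlt
      have hle : c h' ≤ c h := by omega
      have hcast : ((c h - c h' : ℕ) : ℤ) = (c h : ℤ) - (c h' : ℤ) := by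
        push_cast [Nat.cast_sub hle]; ring
      have hz1 : (L : ℤ) ≤ ((c h : ℤ) - (c h' : ℤ)) := by omega
      have hz2 : ((c h : ℤ) - (c h' : ℤ)) ≤ (K : ℤ) - L := by omega
      refine ⟨zmod1_pos_of _ K L hL hz1 hz2, ?_⟩
      have := zmod1_neg_of ((c h : ℤ) - (c h' : ℤ)) K L hL hz1 hz2
      simpa [neg_sub] using this
end

section
/- Let K, t, L be positive integers with tL ≤ K. Then t multiplied by the number of t-element subsets T of {1,…,K} such that every pair of distinct elements j1, j2 ∈ T satisfies Mod(j1−j2, K) ≥ L (equivalently, all pairwise cyclic distances in Z/KZ are at least L) equals K · C(K − tL + t − 1, t − 1). In other words, the number of such subsets is (K/t) · C(K − t(L−1) − 1, t − 1). -/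
/-!
Identify `{1, …, K}` with `ZMod K`, where the admissible sets form a family of `t`-sets that is
invariant under translation. Counting pairs `(j, T)` with `j ∈ T` then gives
`t · #sets = K · #(sets containing 0)`. A set containing `0` is `0` together with `t - 1` points
of `{L, …, K - L}` any two of which are at distance at least `L`, and such sets are counted by
the Pascal recurrence obtained by asking whether the largest candidate point is used.
-/

open Finset Pointwise

theorem mul_card_eq_card_mul_card_filter_zero_mem {G : Type*} [AddGroup G] [Fintype G]
    [DecidableEq G] {𝓕 : Finset (Finset G)} {t : ℕ} (hcard : ∀ T ∈ 𝓕, #T = t)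
    (hvadd : ∀ g : G, ∀ T ∈ 𝓕, g +ᵥ T ∈ 𝓕) :
    t * #𝓕 = Fintype.card G * #{T ∈ 𝓕 | 0 ∈ T} := by
  have hfiber (g : G) : #{T ∈ 𝓕 | g ∈ T} = #{T ∈ 𝓕 | 0 ∈ T} := by
    refine card_nbij' (-g +ᵥ ·) (g +ᵥ ·) ?_ ?_ (fun T _ ↦ vadd_neg_vadd g T)
      (fun T _ ↦ neg_vadd_vadd g T)
    · intro T hT
      simp only [coe_filter, Set.mem_ofPred_eq] at hT ⊢
      exact ⟨hvadd _ _ hT.1, by simpa using vadd_mem_vadd_finset (a := -g) hT.2⟩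
    · intro T hT
      simp only [coe_filter, Set.mem_ofPred_eq] at hT ⊢
      exact ⟨hvadd _ _ hT.1, by simpa using vadd_mem_vadd_finset (a := g) hT.2⟩
  rw [mul_comm, ← sum_const_nat hcard, sum_card hfiber]

def gapSets (d n k : ℕ) : Finset (Finset ℕ) :=
  {S ∈ (range n).powersetCard k | ∀ x ∈ S, ∀ y ∈ S, x < y → x + d < y}

section GapSets

variable {d n k : ℕ}

theorem mem_gapSets {S : Finset ℕ} :
    S ∈ gapSets d n k ↔
      (∀ x ∈ S, x < n) ∧ #S = k ∧ ∀ x ∈ S, ∀ y ∈ S, x < y → x + d < y := by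
  simp only [gapSets, mem_filter, mem_powersetCard, subset_iff, mem_range, and_assoc]

variable (d n k)

theorem card_gapSets_zero_right : #(gapSets d n 0) = 1 := by
  simp [gapSets, filter_singleton]

theorem gapSets_zero_succ : gapSets d 0 (k + 1) = ∅ := by
  simp [gapSets]

theorem filter_notMem_gapSets_succ : {S ∈ gapSets d (n + 1) k | n ∉ S} = gapSets d n k := by
  ext S
  simp only [gapSets, mem_filter, mem_powersetCard, range_add_one]
  constructor
  · rintro ⟨⟨⟨hS, hk⟩, hgap⟩, hn⟩
    exact ⟨⟨(subset_insert_iff_of_notMem hn).mp hS, hk⟩, hgap⟩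
  · rintro ⟨⟨hS, hk⟩, hgap⟩
    exact ⟨⟨⟨hS.trans (subset_insert _ _), hk⟩, hgap⟩, fun hn ↦ by simpa using hS hn⟩

theorem card_filter_mem_gapSets_succ :
    #{S ∈ gapSets d (n + 1) (k + 1) | n ∈ S} = #(gapSets d (n - d) k) := by
  refine card_nbij' (·.erase n) (insert n) ?_ ?_ (fun S hS ↦ insert_erase (mem_filter.mp hS).2)
    (fun S hS ↦ erase_insert fun hn ↦ ?_)
  · intro S hS
    simp only [coe_filter, Set.mem_ofPred_eq, mem_coe, mem_gapSets] at hS ⊢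
    obtain ⟨⟨hlt, hk, hgap⟩, hn⟩ := hS
    refine ⟨fun x hx ↦ ?_, by rw [card_erase_of_mem hn, hk]; rfl,
      fun x hx y hy ↦ hgap x (mem_of_mem_erase hx) y (mem_of_mem_erase hy)⟩
    have := hlt x (mem_of_mem_erase hx)
    have := hgap x (mem_of_mem_erase hx) n hn (by have := ne_of_mem_erase hx; omega)
    omega
  · intro S hS
    simp only [coe_filter, Set.mem_ofPred_eq, mem_coe, mem_gapSets] at hS ⊢
    obtain ⟨hlt, hk, hgap⟩ := hS
    have hlt' : ∀ x ∈ S, x + d < n := fun x hx ↦ by have := hlt x hx; omega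
    have hn : n ∉ S := fun hn ↦ by have := hlt' n hn; omega
    refine ⟨⟨?_, by rw [card_insert_of_notMem hn, hk], ?_⟩, mem_insert_self n S⟩
    · simp only [mem_insert, forall_eq_or_imp]
      exact ⟨by omega, fun x hx ↦ by have := hlt' x hx; omega⟩
    · simp only [mem_insert]
      rintro x (rfl | hx) y (rfl | hy) hxy
      · omega
      · have := hlt' y hy; omega
      · exact hlt' x hx
      · exact hgap x hx y hy hxy
  · have := (mem_gapSets.mp hS).1 n hn
    omega

theorem card_gapSets_succ_succ :
    #(gapSets d (n + 1) (k + 1)) = #(gapSets d n (k + 1)) + #(gapSets d (n - d) k) := by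
  rw [← card_filter_add_card_filter_not (fun S ↦ n ∈ S), filter_notMem_gapSets_succ,
    card_filter_mem_gapSets_succ, add_comm]

/-- `n + d - k * d` is `n - (k - 1) * d`, written so that it is also right for `k = 0` in `ℕ`. -/
theorem card_gapSets : #(gapSets d n k) = (n + d - k * d).choose k := by
  induction n using Nat.strong_induction_on generalizing k with
  | _ n ih =>
  match n, k with
  | _, 0 => simp [card_gapSets_zero_right]
  | 0, k + 1 =>
    rw [gapSets_zero_succ, card_empty, Nat.sub_eq_zero_of_le (by nlinarith), Nat.choose_zero_succ]
  | n + 1, k + 1 =>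
    rw [card_gapSets_succ_succ, ih n (by omega), ih (n - d) (by omega)]
    rcases k with _ | k
    · simp
    have hp : (k + 1 + 1) * d = k * d + d + d := by ring
    have hq : (k + 1) * d = k * d + d := by ring
    rw [hp, hq]
    by_cases h : k * d + d ≤ n
    · rw [show n + 1 + d - (k * d + d + d) = (n - (k * d + d)) + 1 by omega,
        show n + d - (k * d + d + d) = n - (k * d + d) by omega,
        show n - d + d - (k * d + d) = n - (k * d + d) by omega, Nat.choose_succ_succ', add_comm]
    · rw [show n + 1 + d - (k * d + d + d) = 0 by omega, show n + d - (k * d + d + d) = 0 by omega,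
        show n - d + d - (k * d + d) = 0 by omega]
      simp

end GapSets

theorem ZMod.val_natCast_sub_natCast_of_le {K u v : ℕ} (hvu : v ≤ u) (hu : u < K) :
    ((u : ZMod K) - v).val = u - v := by
  rw [← Nat.cast_sub hvu, ZMod.val_natCast_of_lt (by omega)]

theorem ZMod.val_natCast_sub_natCast_of_lt {K u v : ℕ} (huv : u < v) (hv : v < K) :
    ((u : ZMod K) - v).val = K + u - v := by
  have : (u : ZMod K) - v = ((K + u - v : ℕ) : ZMod K) := by
    rw [Nat.cast_sub (by omega)]; push_cast; simp
  rw [this, ZMod.val_natCast_of_lt (by omega)]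

theorem zero_notMem_image_natCast_add {K t d : ℕ} {S : Finset ℕ}
    (hS : S ∈ gapSets d (K - 2 * d - 1) t) :
    (0 : ZMod K) ∉ S.image fun x ↦ ((x + (d + 1) : ℕ) : ZMod K) := by
  simp only [mem_image, not_exists, not_and]
  intro x hx hx0
  have := congrArg ZMod.val hx0
  rw [ZMod.val_natCast_of_lt (by have := (mem_gapSets.mp hS).1 x hx; omega), ZMod.val_zero] at this
  omega

def cyclicSeparatedSets (K : ℕ) [NeZero K] (t L : ℕ) : Finset (Finset (ZMod K)) :=
  {T ∈ univ.powersetCard t | ∀ a ∈ T, ∀ b ∈ T, a ≠ b → L ≤ (a - b).val}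

section CyclicSeparatedSets

variable {K : ℕ} [NeZero K] {t L : ℕ}

theorem mem_cyclicSeparatedSets {T : Finset (ZMod K)} :
    T ∈ cyclicSeparatedSets K t L ↔
      #T = t ∧ ∀ a ∈ T, ∀ b ∈ T, a ≠ b → L ≤ (a - b).val := by
  simp only [cyclicSeparatedSets, mem_filter, mem_powersetCard_univ]

theorem vadd_mem_cyclicSeparatedSets (g : ZMod K) {T : Finset (ZMod K)}
    (hT : T ∈ cyclicSeparatedSets K t L) : g +ᵥ T ∈ cyclicSeparatedSets K t L := by
  rw [mem_cyclicSeparatedSets] at hT ⊢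
  refine ⟨(card_vadd_finset g T).trans hT.1, ?_⟩
  simp only [mem_vadd_finset, vadd_eq_add]
  rintro _ ⟨a, ha, rfl⟩ _ ⟨b, hb, rfl⟩ hab
  rw [add_sub_add_left_eq_sub]
  exact hT.2 a ha b hb fun h ↦ hab (h ▸ rfl)

theorem le_val_of_mem_cyclicSeparatedSets {T : Finset (ZMod K)}
    (hT : T ∈ cyclicSeparatedSets K t L) (h0 : 0 ∈ T) {a : ZMod K} (ha : a ∈ T)
    (ha0 : a ≠ 0) : L ≤ a.val ∧ a.val + L ≤ K := by
  have hsep := (mem_cyclicSeparatedSets.mp hT).2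
  have h1 := hsep a ha 0 h0 ha0
  have h2 := hsep 0 h0 a ha ha0.symm
  rw [sub_zero] at h1
  rw [zero_sub, ZMod.neg_val, if_neg ha0] at h2
  have := ZMod.val_lt a
  omega

variable {d : ℕ}

theorem erase_zero_image_mem_gapSets {T : Finset (ZMod K)}
    (hT : T ∈ cyclicSeparatedSets K (t + 1) (d + 1)) (h0 : 0 ∈ T) :
    (T.erase 0).image (·.val - (d + 1)) ∈ gapSets d (K - 2 * d - 1) t := by
  have hbd {a} (ha : a ∈ T.erase 0) :=
    le_val_of_mem_cyclicSeparatedSets hT h0 (mem_of_mem_erase ha) (ne_of_mem_erase ha)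
  obtain ⟨hcard, hsep⟩ := mem_cyclicSeparatedSets.mp hT
  refine mem_gapSets.mpr ⟨?_, ?_, ?_⟩
  · simp only [mem_image]
    rintro _ ⟨a, ha, rfl⟩
    have := hbd ha
    omega
  · rw [card_image_of_injOn, card_erase_of_mem h0, hcard, Nat.add_sub_cancel]
    intro a ha b hb hab
    have := hbd ha
    have := hbd hb
    exact ZMod.val_injective K (by simp only at hab; omega)
  · simp only [mem_image]
    rintro _ ⟨a, ha, rfl⟩ _ ⟨b, hb, rfl⟩ hab
    have := hbd ha
    have := hbd hb
    have hba := hsep b (mem_of_mem_erase hb) a (mem_of_mem_erase ha) (by rintro rfl; omega)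
    rw [ZMod.val_sub (by omega)] at hba
    omega

theorem insert_zero_image_mem_cyclicSeparatedSets {S : Finset ℕ}
    (hS : S ∈ gapSets d (K - 2 * d - 1) t) :
    insert 0 (S.image fun x ↦ ((x + (d + 1) : ℕ) : ZMod K)) ∈
      cyclicSeparatedSets K (t + 1) (d + 1) := by
  obtain ⟨hlt, hcard, hgap⟩ := mem_gapSets.mp hS
  have hval {x} (hx : x ∈ S) : ((x + (d + 1) : ℕ) : ZMod K).val = x + (d + 1) :=
    ZMod.val_natCast_of_lt (by have := hlt x hx; omega)
  refine mem_cyclicSeparatedSets.mpr ⟨?_, ?_⟩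
  · rw [card_insert_of_notMem (zero_notMem_image_natCast_add hS), card_image_of_injOn, hcard]
    intro x hx y hy hxy
    have := congrArg ZMod.val hxy
    simp only [hval hx, hval hy] at this
    omega
  · simp only [mem_insert, mem_image]
    rintro _ (rfl | ⟨x, hx, rfl⟩) _ (rfl | ⟨y, hy, rfl⟩) hne
    · exact absurd rfl hne
    · have := hlt y hy
      have := ZMod.val_natCast_sub_natCast_of_lt (K := K) (u := 0) (v := y + (d + 1))
        (by omega) (by omega)
      rw [Nat.cast_zero] at this
      omega
    · rw [sub_zero, hval hx]
      omega
    · have := hlt x hx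
      have := hlt y hy
      rcases lt_or_gt_of_ne (fun h : x = y ↦ hne (h ▸ rfl)) with hxy | hxy
      · rw [ZMod.val_natCast_sub_natCast_of_lt (by omega) (by omega)]
        omega
      · rw [ZMod.val_natCast_sub_natCast_of_le (by omega) (by omega)]
        have := hgap y hy x hx hxy
        omega

variable (K t d)

theorem card_filter_zero_mem_cyclicSeparatedSets :
    #{T ∈ cyclicSeparatedSets K (t + 1) (d + 1) | 0 ∈ T} =
      #(gapSets d (K - 2 * d - 1) t) := by
  refine card_nbij' (fun T ↦ (T.erase 0).image (·.val - (d + 1)))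
    (fun S ↦ insert 0 (S.image fun x ↦ ((x + (d + 1) : ℕ) : ZMod K))) ?_ ?_ ?_ ?_
  · intro T hT
    simp only [coe_filter, Set.mem_ofPred_eq] at hT
    exact erase_zero_image_mem_gapSets hT.1 hT.2
  · intro S hS
    simp only [coe_filter, Set.mem_ofPred_eq]
    exact ⟨insert_zero_image_mem_cyclicSeparatedSets hS, mem_insert_self 0 _⟩
  · intro T hT
    simp only [coe_filter, Set.mem_ofPred_eq] at hT
    obtain ⟨hT, h0⟩ := hT
    dsimp only
    rw [image_image]
    conv_rhs => rw [← insert_erase h0]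
    congr 1
    refine (image_congr fun a ha ↦ ?_).trans image_id
    have := le_val_of_mem_cyclicSeparatedSets hT h0 (mem_of_mem_erase ha) (ne_of_mem_erase ha)
    simp only [Function.comp_apply, id, Nat.sub_add_cancel this.1, ZMod.natCast_zmod_val]
  · intro S hS
    dsimp only
    rw [erase_insert (zero_notMem_image_natCast_add hS), image_image]
    refine (image_congr fun x hx ↦ ?_).trans image_id
    have := (mem_gapSets.mp hS).1 x hx
    simp only [Function.comp_apply, id, ZMod.val_natCast_of_lt (by omega : x + (d + 1) < K),
      Nat.add_sub_cancel]

end CyclicSeparatedSets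

theorem zmod1_eq_val_intCast {K : ℕ} [NeZero K] {b : ℤ} (hb : (b : ZMod K) ≠ 0) :
    zmod1 b K = ((b : ZMod K).val : ℤ) := by
  rw [zmod1, if_neg, ZMod.val_intCast]
  rwa [Ne, ZMod.intCast_zmod_eq_zero_iff_dvd, Int.dvd_iff_emod_eq_zero] at hb

/-- The representative of `a` in `{1, …, K}`. -/
def ZMod.reprIcc {K : ℕ} (a : ZMod K) : ℕ := (a - 1).val + 1

@[simp]
theorem ZMod.natCast_reprIcc {K : ℕ} [NeZero K] (a : ZMod K) : (a.reprIcc : ZMod K) = a := by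
  simp [ZMod.reprIcc]

def ZMod.reprIccEmbedding (K : ℕ) [NeZero K] : ZMod K ↪ ℕ :=
  ⟨ZMod.reprIcc, Function.LeftInverse.injective ZMod.natCast_reprIcc⟩

theorem ZMod.map_univ_reprIccEmbedding (K : ℕ) [NeZero K] :
    univ.map (ZMod.reprIccEmbedding K) = Icc 1 K := by
  refine eq_of_subset_of_card_le (fun x hx ↦ ?_) (by simp)
  obtain ⟨a, -, rfl⟩ := mem_map.mp hx
  have := ZMod.val_lt (a - 1)
  simp only [reprIccEmbedding, reprIcc, Function.Embedding.coeFn_mk, mem_Icc]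
  omega

theorem card_filter_powersetCard_Icc_eq_card_cyclicSeparatedSets (K t L : ℕ) [NeZero K] :
    #{T ∈ (Icc 1 K).powersetCard t | ∀ j1 : ℕ, j1 ∈ T → ∀ j2 : ℕ, j2 ∈ T → j1 ≠ j2 →
        (L : ℤ) ≤ zmod1 ((j1 : ℤ) - (j2 : ℤ)) K} = #(cyclicSeparatedSets K t L) := by
  rw [← ZMod.map_univ_reprIccEmbedding, powersetCard_map, filter_map, card_map,
    cyclicSeparatedSets]
  congr 1
  refine filter_congr fun T _ ↦ ?_
  simp only [Function.comp_apply, RelEmbedding.coe_toEmbedding, mapEmbedding_apply,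
    forall_mem_map, (ZMod.reprIccEmbedding K).injective.ne_iff]
  refine forall₂_congr fun a _ ↦ forall₂_congr fun b _ ↦ imp_congr_right fun hab ↦ ?_
  have hcast : (((a.reprIcc : ℤ) - (b.reprIcc : ℤ) : ℤ) : ZMod K) = a - b := by simp
  rw [ZMod.reprIccEmbedding, Function.Embedding.coeFn_mk,
    zmod1_eq_val_intCast (by rwa [hcast, sub_ne_zero]), hcast, Nat.cast_le]

/-- `t` times the number of `t`-element subsets `T` of `{1,…,K}` all of
whose pairs are at cyclic distance at least `L` in `ℤ/Kℤ`
(`Mod(j1−j2,K) ≥ L` for all distinct `j1, j2 ∈ T`) equals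
`K · C(K − tL + t − 1, t − 1)`. -/
theorem stmt_4 (K t L : ℕ) (ht : 1 ≤ t) (hL : 1 ≤ L) (hK : 1 ≤ K) (htL : t * L ≤ K) :
    t * (((Finset.Icc 1 K).powersetCard t).filter
      (fun T => ∀ j1 : ℕ, j1 ∈ T → ∀ j2 : ℕ, j2 ∈ T → j1 ≠ j2 →
        (L : ℤ) ≤ zmod1 ((j1 : ℤ) - (j2 : ℤ)) K)).card
      = K * (K - t * L + t - 1).choose (t - 1) := by
  obtain ⟨s, rfl⟩ : ∃ s, t = s + 1 := ⟨t - 1, by omega⟩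
  obtain ⟨d, rfl⟩ : ∃ d, L = d + 1 := ⟨L - 1, by omega⟩
  have : NeZero K := ⟨by omega⟩
  have hcount := mul_card_eq_card_mul_card_filter_zero_mem
    (𝓕 := cyclicSeparatedSets K (s + 1) (d + 1)) (fun T hT ↦ (mem_cyclicSeparatedSets.mp hT).1)
    (fun g T hT ↦ vadd_mem_cyclicSeparatedSets g hT)
  rw [card_filter_powersetCard_Icc_eq_card_cyclicSeparatedSets, hcount, ZMod.card,
    card_filter_zero_mem_cyclicSeparatedSets, card_gapSets, Nat.add_sub_cancel]
  obtain rfl | hs := Nat.eq_zero_or_pos s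
  · simp
  have hds : d ≤ s * d := Nat.le_mul_of_pos_left d hs
  rw [show (s + 1) * (d + 1) = s * d + s + d + 1 by ring] at htL ⊢
  congr 2
  omega
end

section
/- Fix positive integers t and L and set X = tL − t + 1. For each integer K > tL + L + t define the real numbers f(K) = (K − tL)/(t + 1) and g(K) = [C(K−L−X, t−1) + (K−L−1)·C(K−L−X+1, t) − C(K−L−X, t+1)] / (K · C(K−X, t−1)). Then the ratio f(K)/g(K) tends to 1 as K tends to infinity along the integers. -/
open Filter Finset Nat

private lemma aux_choose (c r : ℕ) :
    Tendsto (fun K : ℕ => ((K - c).choose r : ℝ) / (K : ℝ) ^ r)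
      atTop (nhds ((r ! : ℝ)⁻¹)) := by
  have hr : (r ! : ℝ) ≠ 0 := Nat.cast_ne_zero.mpr r.factorial_ne_zero
  have hterm : ∀ i : ℕ, Tendsto (fun K : ℕ => 1 - ((c : ℝ) + i) / K) atTop (nhds 1) := by
    intro i
    have h0 : Tendsto (fun K : ℕ => ((c : ℝ) + i) / K) atTop (nhds 0) :=
      tendsto_const_nhds.div_atTop tendsto_natCast_atTop_atTop
    simpa using (tendsto_const_nhds (x := (1:ℝ))).sub h0
  have hprod : Tendsto (fun K : ℕ => ∏ i ∈ Finset.range r, (1 - ((c : ℝ) + i) / K))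
      atTop (nhds 1) := by
    have := tendsto_finset_prod (Finset.range r)
      (fun i (_ : i ∈ Finset.range r) => hterm i)
    simpa using this
  have hmain := hprod.div_const (r ! : ℝ)
  refine Tendsto.congr' ?_ (by simpa [one_div] using hmain)
  filter_upwards [eventually_ge_atTop (c + r + 1)] with K hK
  have hK0 : (K : ℝ) ≠ 0 := Nat.cast_ne_zero.mpr (by omega)
  have key : ((K - c).choose r : ℝ) * (r ! : ℝ)
      = ∏ i ∈ Finset.range r, ((K : ℝ) - ((c : ℝ) + i)) := by
    have hch : (K - c).choose r * r ! = ∏ i ∈ Finset.range r, (K - (c + i)) := by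
      rw [mul_comm, ← Nat.descFactorial_eq_factorial_mul_choose,
        Nat.descFactorial_eq_prod_range]
      exact Finset.prod_congr rfl fun i _ => by omega
    calc ((K - c).choose r : ℝ) * (r ! : ℝ)
        = (((K - c).choose r * r ! : ℕ) : ℝ) := by push_cast; ring
      _ = ((∏ i ∈ Finset.range r, (K - (c + i)) : ℕ) : ℝ) := by rw [hch]
      _ = ∏ i ∈ Finset.range r, ((K : ℝ) - ((c : ℝ) + i)) := by
          rw [Nat.cast_prod]
          refine Finset.prod_congr rfl fun i hi => ?_
          have hle : c + i ≤ K := by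
            have := Finset.mem_range.mp hi; omega
          rw [Nat.cast_sub hle]
          push_cast
          ring
  have hfac : ∀ i ∈ Finset.range r,
      (1 - ((c : ℝ) + i) / K) = ((K : ℝ) - ((c : ℝ) + i)) / K := by
    intro i _
    field_simp
  rw [Finset.prod_congr rfl hfac, Finset.prod_div_distrib, Finset.prod_const,
    Finset.card_range, ← key]
  field_simp

private lemma aux_lin (a : ℝ) :
    Tendsto (fun K : ℕ => ((K : ℝ) - a) / K) atTop (nhds 1) := by
  have h0 : Tendsto (fun K : ℕ => a / (K : ℝ)) atTop (nhds 0) :=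
    tendsto_const_nhds.div_atTop tendsto_natCast_atTop_atTop
  have := (tendsto_const_nhds (x := (1:ℝ))).sub h0
  refine Tendsto.congr' ?_ (by simpa using this)
  filter_upwards [eventually_ge_atTop 1] with K hK
  have hK0 : (K : ℝ) ≠ 0 := Nat.cast_ne_zero.mpr (by omega)
  field_simp

private lemma rearrA (f C N K : ℝ) (s : ℕ) (hK : K ≠ 0) :
    f / (N / (K * C)) = (f / K * (C / K ^ s)) / (N / K ^ (s + 2)) := by
  rw [div_div_eq_mul_div, div_div_eq_mul_div]
  congr 1
  field_simp
  ring

private lemma rearr2 (f C A B C2 K w : ℝ) (s : ℕ) (hK : K ≠ 0) :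
    f / K * (C / K ^ s) / (A / K ^ (s + 2) + w / K * (B / K ^ (s + 1)) - C2 / K ^ (s + 2))
      = f / ((A + w * B - C2) / (K * C)) := by
  have h1 : A / K ^ (s + 2) + w / K * (B / K ^ (s + 1)) - C2 / K ^ (s + 2)
      = (A + w * B - C2) / K ^ (s + 2) := by
    field_simp
    ring
  rw [h1, rearrA f C (A + w * B - C2) K s hK]

/-- with `X = tL − t + 1`, `f(K) = (K − tL)/(t+1)` and
`g(K) = [C(K−L−X,t−1) + (K−L−1)·C(K−L−X+1,t) − C(K−L−X,t+1)] / (K·C(K−X,t−1))`,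
the ratio `f(K)/g(K)` tends to `1` as the integer `K → ∞`. -/
theorem stmt_6 (t L : ℕ) (ht : 1 ≤ t) (hL : 1 ≤ L)
    (X : ℕ) (hX : X = t * L - t + 1) :
    Filter.Tendsto (fun K : ℕ =>
      (((K : ℝ) - t * L) / (t + 1)) /
        ((((K - L - X).choose (t - 1) : ℝ)
            + ((K : ℝ) - L - 1) * ((K - L - X + 1).choose t : ℝ)
            - ((K - L - X).choose (t + 1) : ℝ))
          / ((K : ℝ) * ((K - X).choose (t - 1) : ℝ))))
      Filter.atTop (nhds 1) := by
  obtain ⟨s, rfl⟩ : ∃ s, t = s + 1 := ⟨t - 1, by omega⟩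
  simp only [Nat.add_sub_cancel]
  -- limits of the pieces
  have hs : ((s ! : ℕ) : ℝ) ≠ 0 := Nat.cast_ne_zero.mpr s.factorial_ne_zero
  have h1 : Tendsto (fun K : ℕ => ((K : ℝ) - (s + 1 : ℕ) * L) / ((s + 1 : ℕ) + 1) / K)
      atTop (nhds (1 / ((s : ℝ) + 2))) := by
    have := (aux_lin ((s + 1 : ℕ) * L)).div_const (((s + 1 : ℕ) : ℝ) + 1)
    refine Tendsto.congr (fun K => div_right_comm _ _ _) ?_
    push_cast at this ⊢
    convert this using 2
    ring
  have h2 := aux_choose X s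
  have h3 : Tendsto (fun K : ℕ => ((K - (L + X)).choose s : ℝ) / (K : ℝ) ^ (s + 2))
      atTop (nhds 0) := by
    have hpow : Tendsto (fun K : ℕ => (K : ℝ) ^ 2) atTop atTop :=
      (tendsto_pow_atTop two_ne_zero).comp tendsto_natCast_atTop_atTop
    have := (aux_choose (L + X) s).div_atTop hpow
    refine Tendsto.congr (fun K => ?_) this
    rw [div_div, ← pow_add]
  have h4 : Tendsto (fun K : ℕ =>
      ((K : ℝ) - (L + 1)) / K * (((K - (L + X - 1)).choose (s + 1) : ℝ) / (K : ℝ) ^ (s + 1)))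
      atTop (nhds (1 * (((s + 1)! : ℝ))⁻¹)) :=
    (aux_lin (L + 1)).mul (aux_choose (L + X - 1) (s + 1))
  have h5 := aux_choose (L + X) (s + 2)
  have hNlim := (h3.add h4).sub h5
  have hNne : (0 + 1 * (((s + 1)! : ℝ))⁻¹ - (((s + 2)! : ℝ))⁻¹) ≠ 0 := by
    have h1' : (0:ℝ) < ((s + 1)! : ℝ) := by positivity
    have h2' : ((s + 1)! : ℝ) < ((s + 2)! : ℝ) := by
      exact_mod_cast (Nat.factorial_lt (by omega)).mpr (by omega)
    have := inv_strictAnti₀ h1' h2'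
    nlinarith [this]
  have total := ((h1.mul h2).div hNlim hNne)
  have hval : (1 / ((s : ℝ) + 2) * ((s ! : ℝ))⁻¹)
      / (0 + 1 * (((s + 1)! : ℝ))⁻¹ - (((s + 2)! : ℝ))⁻¹) = 1 := by
    have e1 : ((s + 1)! : ℝ) = ((s : ℝ) + 1) * (s ! : ℝ) := by
      rw [Nat.factorial_succ]; push_cast; ring
    have e2 : ((s + 2)! : ℝ) = ((s : ℝ) + 2) * (((s + 1)! : ℝ)) := by
      rw [show s + 2 = (s+1) + 1 from rfl, Nat.factorial_succ]; push_cast; ring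
    have hs1 : (s : ℝ) + 1 ≠ 0 := by positivity
    have hs2 : (s : ℝ) + 2 ≠ 0 := by positivity
    have key : (0 : ℝ) + 1 * (((s + 1)! : ℝ))⁻¹ - (((s + 2)! : ℝ))⁻¹
        = 1 / ((s : ℝ) + 2) * ((s ! : ℝ))⁻¹ := by
      rw [e2, e1]; field_simp; ring
    rw [key, div_self]
    have hspos : (0 : ℝ) < (s ! : ℝ) := Nat.cast_pos.mpr s.factorial_pos
    positivity
  rw [hval] at total
  refine Tendsto.congr' ?_ total
  filter_upwards [eventually_ge_atTop (L + X + s + 3)] with K hK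
  have hK0 : (K : ℝ) ≠ 0 := Nat.cast_ne_zero.mpr (by omega)
  have e1 : K - L - X = K - (L + X) := by omega
  have e2 : K - (L + X) + 1 = K - (L + X - 1) := by omega
  simp only [Pi.div_apply]
  rw [e1, e2]
  have e3 : (K : ℝ) - (L : ℝ) - 1 = (K : ℝ) - ((L : ℝ) + 1) := by ring
  rw [e3]
  exact rearr2 _ _ _ _ _ _ _ s hK0
end

section
/- Let K, t, L be positive integers such that K − tL is even, K − tL ≥ 2, and t(K − tL) ≥ 2K. Then, as real numbers, (K − tL)/(t + 1) < ∑_{h=(K−tL+2)/2}^{K−tL} 2/(1 + ⌈tL/h⌉), where the sum is over integers h and ⌈tL/h⌉ denotes the ceiling of the rational number tL/h. -/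
/-!
Write `n = K − tL`. The constraint `2K ≤ t n` reads `2tL ≤ (t − 2) n`, and every summation index
satisfies `n < 2h`, so `tL/h ≤ t − 2` and each summand is at least `2/(t − 1)`. The range has at
least `n/2` indices, so the sum is at least `n/(t − 1) > n/(t + 1)`.
-/

open Finset

lemma div_one_add_le_div_one_add_ceil {c : ℝ} {q : ℚ} {s : ℤ} (hc : 0 ≤ c) (hq : 0 ≤ q)
    (hqs : q ≤ s) : c / (1 + s) ≤ c / (1 + (⌈q⌉ : ℝ)) := by
  have hceil : (0 : ℝ) ≤ ⌈q⌉ := by exact_mod_cast Int.ceil_nonneg hq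
  have hle : (⌈q⌉ : ℝ) ≤ s := by exact_mod_cast Int.ceil_le.mpr hqs
  exact div_le_div_of_nonneg_left hc (by linarith) (by linarith)

lemma le_two_mul_card_Icc_half (n : ℕ) : n ≤ 2 * #(Icc ((n + 2) / 2) n) := by
  rw [Nat.card_Icc]
  omega

lemma lt_two_mul_of_mem_Icc_half {n h : ℕ} (hh : h ∈ Icc ((n + 2) / 2) n) : n < 2 * h := by
  rw [mem_Icc] at hh
  omega

lemma le_sub_two_mul {t a n h : ℕ} (ht : 2 ≤ t) (hbig : 2 * (a + n) ≤ t * n) (hnh : n < 2 * h) :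
    (a : ℚ) ≤ (t - 2) * h := by
  have hbig' : 2 * ((a : ℚ) + n) ≤ t * n := by exact_mod_cast hbig
  have hnh' : (n : ℚ) + 1 ≤ 2 * h := by exact_mod_cast hnh
  have ht' : (0 : ℚ) ≤ t - 2 := by rw [sub_nonneg]; exact_mod_cast ht
  nlinarith [mul_le_mul_of_nonneg_left hnh' ht']

lemma two_div_sub_one_le_two_div_one_add_ceil {t L n h : ℕ} (ht : 2 ≤ t)
    (hbig : 2 * (t * L + n) ≤ t * n) (hnh : n < 2 * h) :
    2 / ((t : ℝ) - 1) ≤ 2 / (1 + ((⌈(t * L : ℚ) / h⌉ : ℤ) : ℝ)) := by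
  have hpos : (0 : ℚ) < h := by exact_mod_cast (by omega : 0 < h)
  have hq : (t * L : ℚ) / h ≤ ((t - 2 : ℤ) : ℚ) := by
    rw [div_le_iff₀ hpos]
    push_cast
    exact_mod_cast le_sub_two_mul ht hbig hnh
  have := div_one_add_le_div_one_add_ceil zero_le_two (by positivity) hq
  push_cast at this
  convert this using 2
  ring

theorem stmt_9_general (K t L : ℕ)
    (h2 : 2 ≤ K - t * L)
    (hbig : 2 * K ≤ t * (K - t * L)) :
    ((K : ℝ) - t * L) / (t + 1) <
      ∑ h ∈ Finset.Icc ((K - t * L + 2) / 2) (K - t * L),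
        2 / (1 + ((⌈(t * L : ℚ) / (h : ℚ)⌉ : ℤ) : ℝ)) := by
  set n := K - t * L
  have hK : K = t * L + n := by omega
  have ht : 2 ≤ t := by nlinarith
  have hsum := card_nsmul_le_sum _ _ _ fun h hh ↦
    two_div_sub_one_le_two_div_one_add_ceil ht (hK ▸ hbig) (lt_two_mul_of_mem_Icc_half hh)
  rw [nsmul_eq_mul] at hsum
  have hcard : (n : ℝ) ≤ 2 * #(Icc ((n + 2) / 2) n) := by exact_mod_cast le_two_mul_card_Icc_half n
  have hn : (0 : ℝ) < n := by exact_mod_cast (by omega : 0 < n)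
  have htr : (2 : ℝ) ≤ t := by exact_mod_cast ht
  calc ((K : ℝ) - t * L) / (t + 1) = n / (t + 1) := by rw [hK]; push_cast; ring
    _ < n / (t - 1) := div_lt_div_of_pos_left hn (by linarith) (by linarith)
    _ ≤ #(Icc ((n + 2) / 2) n) * (2 / (t - 1)) := by
      rw [mul_div_assoc', div_le_div_iff_of_pos_right (by linarith)]
      linarith
    _ ≤ _ := hsum

/-- if `K − tL` is even, `K − tL ≥ 2` and `t(K − tL) ≥ 2K`, then
`(K − tL)/(t+1) < ∑_{h=(K−tL+2)/2}^{K−tL} 2/(1 + ⌈tL/h⌉)` as real numbers. -/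
theorem stmt_9 (K t L : ℕ) (ht : 1 ≤ t) (hL : 1 ≤ L)
    (heven : Even (K - t * L)) (h2 : 2 ≤ K - t * L)
    (hbig : 2 * K ≤ t * (K - t * L)) :
    ((K : ℝ) - t * L) / (t + 1) <
      ∑ h ∈ Finset.Icc ((K - t * L + 2) / 2) (K - t * L),
        2 / (1 + ((⌈(t * L : ℚ) / (h : ℚ)⌉ : ℤ) : ℝ)) :=
  stmt_9_general K t L h2 hbig
end

section
/- Let P be a (K',F',Z,S) PDA satisfying conditions C4 (every row has exactly t = K'Z/F' stars) and C5 (with respect to t and a positive integer L), and set K = K' + t(L−1). Let Q be the F' × K user-delivery array constructed from P (stars exactly on U_j in row j, and the h-th null of row j filled with the h-th integer of row j of P). For each g ∈ {1,…,K} let Q^{(g)} be the F' × K array with Q^{(g)}(j,k) = Q(j, Mod(k−g+1, K)), where every integer entry s of the g-th block is relabeled as s + (g−1)S, and let Q̂ be the (K F') × K array obtained by stacking Q^{(1)}, …, Q^{(K)} vertically. Then Q̂ is a (K, KF', tLF', KS) PDA. -/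
/-- `natMod1 b a` is the representative of the integer `b` modulo `a` lying in
`{1, …, a}` (i.e. `Mod(b,a)` in the paper's notation), as a natural number. -/
def natMod1 (b : ℤ) (a : ℕ) : ℕ :=
  (if b % (a : ℤ) = 0 then (a : ℤ) else b % (a : ℤ)).toNat

/-!
Row `j` of `Q` is row `j` of `P` with each star widened to a run of `L` stars and the integers
kept in order, so each row of `Q` has `tL` stars. For two equal integers of `P`, condition C5 says
that the widened position of each lies among the stars of the other's row, which is C3 for `Q`.
The blocks `Q^{(g)}` use disjoint alphabets, so equal entries of `Q̂` lie in one block, a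
column-permuted copy of `Q`; and a fixed column of `Q̂` meets row `j` of `Q` once in each of its
`K` cyclic positions, hence contains `tL` stars per `j`.
-/

namespace MultiaccessPDA

open Finset

section Rank

variable {s : Finset ℕ} {x y : ℕ}

lemma rankIn_mono (s : Finset ℕ) (h : x ≤ y) : rankIn s x ≤ rankIn s y :=
  card_le_card <| monotone_filter_right s fun _ _ hz => le_trans hz h

lemma one_le_rankIn (hx : x ∈ s) : 1 ≤ rankIn s x :=
  card_pos.2 ⟨x, mem_filter.2 ⟨hx, le_rfl⟩⟩

lemma rankIn_le_card (s : Finset ℕ) (x : ℕ) : rankIn s x ≤ s.card :=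
  card_le_card (filter_subset _ _)

lemma rankIn_lt_rankIn (hy : y ∈ s) (hxy : x < y) : rankIn s x < rankIn s y := by
  refine card_lt_card ⟨monotone_filter_right s fun _ _ hz => le_trans hz hxy.le, fun hsub => ?_⟩
  have := (mem_filter.1 (hsub (mem_filter.2 ⟨hy, le_rfl⟩))).2
  omega

lemma rankIn_insert_self (hx : x ∉ s) : rankIn (insert x s) x = rankIn s x + 1 := by
  rw [rankIn, filter_insert, if_pos le_rfl, card_insert_of_notMem fun h => hx (mem_filter.1 h).1]
  rfl

lemma rankIn_image_of_strictMono {f : ℕ → ℕ} (hf : StrictMono f) (s : Finset ℕ) (x : ℕ) :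
    rankIn (s.image f) (f x) = rankIn s x := by
  simp only [rankIn, filter_image, hf.le_iff_le]
  exact card_image_of_injective _ hf.injective

end Rank

/-- Where the non-star column `x` of a row with star set `A` lands: each star before `x` has been
widened by `L - 1` columns. -/
def expandedCol (L : ℕ) (A : Finset ℕ) (x : ℕ) : ℕ := x + rankIn A x * (L - 1)

section Expansion

variable {K' L : ℕ} {A : Finset ℕ} {x : ℕ}

lemma expandedCol_eq (hx : x ∉ A) :
    x + (rankIn (insert x A) x - 1) * (L - 1) = expandedCol L A x := by
  rw [rankIn_insert_self hx, Nat.add_sub_cancel, expandedCol]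

lemma expandedCol_strictMono (L : ℕ) (A : Finset ℕ) : StrictMono (expandedCol L A) := by
  intro x y hxy
  have := Nat.mul_le_mul_right (L - 1) (rankIn_mono A hxy.le)
  simp only [expandedCol]
  omega

lemma mem_Uset {u : ℕ} :
    u ∈ Uset L A ↔ ∃ a ∈ A,
      a + (rankIn A a - 1) * (L - 1) ≤ u ∧ u ≤ a + rankIn A a * (L - 1) := by
  simp [Uset]

lemma card_Uset (hL : 1 ≤ L) : (Uset L A).card = A.card * L := by
  rw [Uset, card_biUnion]
  · rw [sum_congr rfl fun a ha => ?_, sum_const, smul_eq_mul]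
    have h1 := one_le_rankIn ha
    obtain ⟨r, hr⟩ : ∃ r, rankIn A a = r + 1 := ⟨rankIn A a - 1, by omega⟩
    rw [Nat.card_Icc, hr, Nat.add_sub_cancel, add_mul, one_mul]
    omega
  · intro a ha b hb hab
    wlog hlt : a < b generalizing a b
    · exact (this hb ha (Ne.symm hab) (by omega)).symm
    have := Nat.mul_le_mul_right (L - 1)
      (Nat.le_sub_one_of_lt (rankIn_lt_rankIn hb hlt))
    refine disjoint_left.2 fun u hua hub => ?_
    rw [mem_Icc] at hua hub
    omega

lemma Uset_subset_Icc (hA : A ⊆ Icc 1 K') : Uset L A ⊆ Icc 1 (K' + A.card * (L - 1)) := by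
  intro u hu
  obtain ⟨a, ha, h1, h2⟩ := mem_Uset.1 hu
  have haK := mem_Icc.1 (hA ha)
  have := Nat.mul_le_mul_right (L - 1) (rankIn_le_card A a)
  rw [mem_Icc]
  omega

lemma expandedCol_notMem_Uset (hx : x ∉ A) : expandedCol L A x ∉ Uset L A := by
  intro h
  obtain ⟨a, ha, h1, h2⟩ := mem_Uset.1 h
  simp only [expandedCol] at h1 h2
  rcases lt_trichotomy a x with hax | rfl | hxa
  · have := Nat.mul_le_mul_right (L - 1) (rankIn_mono A hax.le)
    omega
  · exact hx ha
  · have := Nat.mul_le_mul_right (L - 1)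
      (Nat.le_sub_one_of_lt (rankIn_lt_rankIn ha hxa))
    omega

lemma expandedCol_mem_Icc (hx : x ∈ Icc 1 K') :
    expandedCol L A x ∈ Icc 1 (K' + A.card * (L - 1)) := by
  have := Nat.mul_le_mul_right (L - 1) (rankIn_le_card A x)
  rw [mem_Icc] at hx ⊢
  simp only [expandedCol]
  omega

lemma image_expandedCol (hA : A ⊆ Icc 1 K') (hL : 1 ≤ L) :
    (Icc 1 K' \ A).image (expandedCol L A) = Icc 1 (K' + A.card * (L - 1)) \ Uset L A := by
  refine eq_of_subset_of_card_le (fun u hu => ?_) ?_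
  · obtain ⟨x, hx, rfl⟩ := mem_image.1 hu
    obtain ⟨hxK, hxA⟩ := mem_sdiff.1 hx
    exact mem_sdiff.2 ⟨expandedCol_mem_Icc hxK, expandedCol_notMem_Uset hxA⟩
  · have hAK : A.card ≤ K' := by simpa using card_le_card hA
    have hLt : A.card * L = A.card * (L - 1) + A.card := by
      conv_lhs => rw [← Nat.sub_add_cancel hL]
      ring
    rw [card_sdiff_of_subset (Uset_subset_Icc hA), card_Uset hL,
      card_image_of_injective _ (expandedCol_strictMono L A).injective,
      card_sdiff_of_subset hA, Nat.card_Icc, Nat.card_Icc]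
    omega

lemma rankIn_expandedCol (hA : A ⊆ Icc 1 K') (hL : 1 ≤ L) (x : ℕ) :
    rankIn (Icc 1 (K' + A.card * (L - 1)) \ Uset L A) (expandedCol L A x)
      = rankIn (Icc 1 K' \ A) x := by
  rw [← image_expandedCol hA hL, rankIn_image_of_strictMono (expandedCol_strictMono L A)]

end Expansion

section NatMod1

variable {K : ℕ}

lemma natMod1_mem (hK : 0 < K) (b : ℤ) : natMod1 b K ∈ Icc 1 K := by
  have h0 : 0 ≤ b % (K : ℤ) := Int.emod_nonneg b (by omega)
  have h1 : b % (K : ℤ) < K := Int.emod_lt_of_pos b (by omega)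
  rw [natMod1, mem_Icc]
  split_ifs <;> omega

lemma natMod1_modEq (hK : 0 < K) (b : ℤ) : (natMod1 b K : ℤ) ≡ b [ZMOD K] := by
  have h0 : 0 ≤ b % (K : ℤ) := Int.emod_nonneg b (by omega)
  rw [natMod1]
  split_ifs with h
  · rw [Int.toNat_natCast, Int.ModEq, Int.emod_self, h]
  · rw [Int.toNat_of_nonneg h0]
    exact Int.mod_modEq b K

lemma eq_of_modEq_of_mem_Icc {u v : ℕ} (hu : u ∈ Icc 1 K) (hv : v ∈ Icc 1 K)
    (h : (u : ℤ) ≡ v [ZMOD K]) : u = v := by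
  rw [mem_Icc] at hu hv
  have := Int.eq_zero_of_abs_lt_dvd h.dvd (abs_sub_lt_iff.2 ⟨by omega, by omega⟩)
  omega

lemma natMod1_eq_iff {u : ℕ} (hu : u ∈ Icc 1 K) (b : ℤ) :
    natMod1 b K = u ↔ (u : ℤ) ≡ b [ZMOD K] := by
  have hK : 0 < K := by rw [mem_Icc] at hu; omega
  exact ⟨fun h => h ▸ natMod1_modEq hK b, fun h =>
    eq_of_modEq_of_mem_Icc (natMod1_mem hK b) hu ((natMod1_modEq hK b).trans h.symm)⟩

lemma natMod1_eq_natMod1_iff (hK : 0 < K) (a b : ℤ) :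
    natMod1 a K = natMod1 b K ↔ a ≡ b [ZMOD K] := by
  rw [eq_comm, natMod1_eq_iff (natMod1_mem hK a)]
  exact ⟨fun h => (natMod1_modEq hK a).symm.trans h, fun h => (natMod1_modEq hK a).trans h⟩

lemma natMod1_sub_natMod1_sub {u : ℕ} (hu : u ∈ Icc 1 K) (k : ℤ) :
    natMod1 (k - natMod1 (k - u + 1) K + 1) K = u := by
  have hK : 0 < K := by rw [mem_Icc] at hu; omega
  rw [natMod1_eq_iff hu]
  have := ((natMod1_modEq hK (k - u + 1)).neg.add_right (k + 1)).symm
  convert this using 1 <;> ring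

lemma natMod1_sub_natMod1_add {u : ℕ} (hu : u ∈ Icc 1 K) (g : ℤ) :
    natMod1 (natMod1 (u + g - 1) K - g + 1) K = u := by
  have hK : 0 < K := by rw [mem_Icc] at hu; omega
  rw [natMod1_eq_iff hu]
  have := ((natMod1_modEq hK (u + g - 1)).add_right (1 - g)).symm
  convert this using 1 <;> ring

/-- `g ↦ Mod(k - g + 1, K)` is an involution of `{1, …, K}`, so it preserves counts. -/
lemma card_filter_natMod1_sub (p : ℕ → Prop) [DecidablePred p] (k : ℤ) :
    ((Icc 1 K).filter fun g : ℕ => p (natMod1 (k - g + 1) K)).card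
      = ((Icc 1 K).filter p).card := by
  have hmem : ∀ g ∈ Icc 1 K, natMod1 (k - g + 1) K ∈ Icc 1 K := fun g hg =>
    natMod1_mem (by rw [mem_Icc] at hg; omega) _
  refine card_nbij' (fun g => natMod1 (k - g + 1) K) (fun g => natMod1 (k - g + 1) K)
    ?_ ?_ ?_ ?_
  · intro g hg
    simp only [coe_filter, Set.mem_ofPred_eq] at hg ⊢
    exact ⟨hmem g hg.1, hg.2⟩
  · intro u hu
    simp only [coe_filter, Set.mem_ofPred_eq] at hu ⊢
    exact ⟨hmem u hu.1, by rw [natMod1_sub_natMod1_sub hu.1]; exact hu.2⟩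
  · intro g hg
    exact natMod1_sub_natMod1_sub (mem_filter.1 hg).1 k
  · intro u hu
    exact natMod1_sub_natMod1_sub (mem_filter.1 hu).1 k

end NatMod1

lemma exists_eq_add_sub_one_mul {K S s : ℕ} (hs : s ∈ Icc 1 (K * S)) :
    ∃ g ∈ Icc 1 K, ∃ s₀ ∈ Icc 1 S, s = s₀ + (g - 1) * S := by
  rw [mem_Icc] at hs
  have hS : 0 < S := Nat.pos_of_ne_zero fun h => by simp [h] at hs; omega
  refine ⟨(s - 1) / S + 1, mem_Icc.2 ⟨Nat.le_add_left 1 _, ?_⟩, (s - 1) % S + 1,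
    mem_Icc.2 ⟨by omega, Nat.mod_lt _ hS⟩, ?_⟩
  · exact Nat.div_lt_of_lt_mul (by rw [Nat.mul_comm]; omega)
  · have := Nat.mod_add_div' (s - 1) S
    rw [Nat.add_sub_cancel]
    omega

lemma eq_and_eq_of_add_mul_eq {S a b g h : ℕ} (ha : a ∈ Icc 1 S) (hb : b ∈ Icc 1 S)
    (e : a + g * S = b + h * S) : a = b ∧ g = h := by
  rw [mem_Icc] at ha hb
  have e' : a - 1 + g * S = b - 1 + h * S := by omega
  have hS : 0 < S := by omega
  have hmod := congrArg (· % S) e'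
  have hdiv := congrArg (· / S) e'
  simp only [Nat.add_mul_mod_self_right, Nat.add_mul_div_right _ _ hS] at hmod hdiv
  rw [Nat.mod_eq_of_lt (by omega), Nat.mod_eq_of_lt (by omega)] at hmod
  rw [Nat.div_eq_of_lt (by omega), Nat.div_eq_of_lt (by omega)] at hdiv
  omega

/-- Row `(g, j)` of `Q̂`, i.e. row `j` of `Q^{(g)}`. -/
def cyclicStack {F' : ℕ} (S K : ℕ) (Q : Fin F' → ℕ → Option ℕ) (g : ℕ) (j : Fin F') (k : ℕ) :
    Option ℕ :=
  Option.map (fun s => s + (g - 1) * S) (Q j (natMod1 ((k : ℤ) - (g : ℤ) + 1) K))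

section CyclicStack

variable {F' K S : ℕ} {Q : Fin F' → ℕ → Option ℕ}

lemma cyclicStack_mem_Icc (hQ : ∀ j, ∀ m ∈ Icc 1 K, ∀ s, Q j m = some s → s ∈ Icc 1 S)
    {g : ℕ} (hg : g ∈ Icc 1 K) {j : Fin F'} {k s : ℕ} (h : cyclicStack S K Q g j k = some s) :
    s ∈ Icc 1 (K * S) := by
  obtain ⟨s₀, hs₀, rfl⟩ := Option.map_eq_some_iff.1 h
  obtain ⟨hg1, hgK⟩ := mem_Icc.1 hg
  have hs₀S := mem_Icc.1 (hQ j _ (natMod1_mem (by omega) _) s₀ hs₀)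
  have hblock : (g - 1) * S ≤ (K - 1) * S := Nat.mul_le_mul_right S (by omega)
  have hS : S ≤ K * S := Nat.le_mul_of_pos_left S (by omega)
  rw [Nat.sub_one_mul K S] at hblock
  rw [mem_Icc]
  omega

lemma card_filter_cyclicStack_eq_none {r : ℕ}
    (hr : ∀ j, ((Icc 1 K).filter fun m => Q j m = none).card = r) (k : ℕ) :
    ((Icc 1 K ×ˢ (univ : Finset (Fin F'))).filter
      fun p => cyclicStack S K Q p.1 p.2 k = none).card = r * F' := by
  have hcol : ∀ j, ((Icc 1 K).filter fun g => cyclicStack S K Q g j k = none).card = r :=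
    fun j => by
      simp only [cyclicStack, Option.map_eq_none_iff]
      rw [card_filter_natMod1_sub (fun m => Q j m = none), hr]
  rw [card_filter, sum_product, sum_comm]
  simp only [← card_filter, hcol, sum_const, card_univ, Fintype.card_fin, smul_eq_mul,
    Nat.mul_comm]

lemma exists_cyclicStack_eq_some
    (hQ : ∀ s ∈ Icc 1 S, ∃ j, ∃ m ∈ Icc 1 K, Q j m = some s) {s : ℕ} (hs : s ∈ Icc 1 (K * S)) :
    ∃ g ∈ Icc 1 K, ∃ j : Fin F', ∃ k ∈ Icc 1 K, cyclicStack S K Q g j k = some s := by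
  obtain ⟨g, hg, s₀, hs₀, rfl⟩ := exists_eq_add_sub_one_mul hs
  obtain ⟨j, m, hm, hQm⟩ := hQ s₀ hs₀
  refine ⟨g, hg, j, natMod1 ((m : ℤ) + g - 1) K,
    natMod1_mem (by rw [mem_Icc] at hg; omega) _, ?_⟩
  rw [cyclicStack, natMod1_sub_natMod1_add hm, hQm, Option.map_some]

lemma cyclicStack_cross (hQ : ∀ j, ∀ m ∈ Icc 1 K, ∀ s, Q j m = some s → s ∈ Icc 1 S)
    (hcross : ∀ j1 j2 : Fin F', ∀ m1 ∈ Icc 1 K, ∀ m2 ∈ Icc 1 K,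
      (j1, m1) ≠ (j2, m2) → Q j1 m1 = Q j2 m2 → Q j1 m1 ≠ none →
      j1 ≠ j2 ∧ m1 ≠ m2 ∧ Q j1 m2 = none ∧ Q j2 m1 = none)
    {g1 g2 : ℕ} (hg1 : g1 ∈ Icc 1 K) (hg2 : g2 ∈ Icc 1 K) {j1 j2 : Fin F'} {k1 k2 : ℕ}
    (hk1 : k1 ∈ Icc 1 K) (hk2 : k2 ∈ Icc 1 K) (hne : ((g1, j1), k1) ≠ ((g2, j2), k2))
    (heq : cyclicStack S K Q g1 j1 k1 = cyclicStack S K Q g2 j2 k2)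
    (hsome : cyclicStack S K Q g1 j1 k1 ≠ none) :
    (g1, j1) ≠ (g2, j2) ∧ k1 ≠ k2 ∧
      cyclicStack S K Q g1 j1 k2 = none ∧ cyclicStack S K Q g2 j2 k1 = none := by
  have hK : 0 < K := by rw [mem_Icc] at hg1; omega
  set m1 := natMod1 ((k1 : ℤ) - g1 + 1) K
  set m2 := natMod1 ((k2 : ℤ) - g2 + 1) K
  obtain ⟨s, hs⟩ := Option.ne_none_iff_exists'.1 hsome
  obtain ⟨s1, hQ1, rfl⟩ := Option.map_eq_some_iff.1 hs
  obtain ⟨s2, hQ2, hs12⟩ := Option.map_eq_some_iff.1 (heq ▸ hs)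
  obtain ⟨rfl, hg⟩ := eq_and_eq_of_add_mul_eq (hQ j2 m2 (natMod1_mem hK _) s2 hQ2)
    (hQ j1 m1 (natMod1_mem hK _) s1 hQ1) hs12
  obtain rfl : g1 = g2 := by rw [mem_Icc] at hg1 hg2; omega
  have hm : (j1, m1) ≠ (j2, m2) := by
    intro h
    obtain rfl : j1 = j2 := congrArg Prod.fst h
    have hk : (k1 : ℤ) ≡ k2 [ZMOD K] := by
      have := ((natMod1_eq_natMod1_iff hK _ _).1 (congrArg Prod.snd h)).add_right ((g1 : ℤ) - 1)
      ring_nf at this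
      exact this
    exact hne (by rw [eq_of_modEq_of_mem_Icc hk1 hk2 hk])
  obtain ⟨hj, hm12, hQ12, hQ21⟩ :=
    hcross j1 j2 m1 (natMod1_mem hK _) m2 (natMod1_mem hK _) hm (by rw [hQ1, hQ2])
      (by rw [hQ1]; exact Option.some_ne_none _)
  refine ⟨fun h => hj (congrArg Prod.snd h), fun h => hm12 (by subst h; rfl), ?_, ?_⟩
  · simp only [cyclicStack, Option.map_eq_none_iff]
    exact hQ12
  · simp only [cyclicStack, Option.map_eq_none_iff]
    exact hQ21

end CyclicStack

structure IsRowExpansion (K' L K : ℕ) (p : ℕ → Option ℕ) (A : Finset ℕ) (q : ℕ → Option ℕ) :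
    Prop where
  stars_eq : A = (Icc 1 K').filter fun k => p k = none
  card_eq : K = K' + A.card * (L - 1)
  one_le : 1 ≤ L
  eq_none_iff : ∀ k ∈ Icc 1 K, (q k = none ↔ k ∈ Uset L A)
  eq_of_rankIn_eq : ∀ k ∈ Icc 1 K, k ∉ Uset L A → ∀ k' ∈ Icc 1 K', p k' ≠ none →
    rankIn (Icc 1 K \ Uset L A) k = rankIn ((Icc 1 K').filter fun c => p c ≠ none) k' →
    q k = p k'

namespace IsRowExpansion

variable {K' L K : ℕ} {p q : ℕ → Option ℕ} {A : Finset ℕ} {x m s : ℕ}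

lemma subset_Icc (h : IsRowExpansion K' L K p A q) : A ⊆ Icc 1 K' :=
  h.stars_eq ▸ filter_subset _ _

lemma notMem_of_ne_none (h : IsRowExpansion K' L K p A q) (hx : p x ≠ none) : x ∉ A := by
  rw [h.stars_eq, mem_filter]
  exact fun hA => hx hA.2

lemma expandedCol_mem_Icc (h : IsRowExpansion K' L K p A q) (hx : x ∈ Icc 1 K') :
    expandedCol L A x ∈ Icc 1 K :=
  h.card_eq ▸ MultiaccessPDA.expandedCol_mem_Icc hx

lemma apply_expandedCol (h : IsRowExpansion K' L K p A q) (hx : x ∈ Icc 1 K')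
    (hpx : p x ≠ none) : q (expandedCol L A x) = p x := by
  refine h.eq_of_rankIn_eq _ (h.expandedCol_mem_Icc hx)
    (expandedCol_notMem_Uset (h.notMem_of_ne_none hpx)) x hx hpx ?_
  rw [filter_not, ← h.stars_eq, h.card_eq]
  exact rankIn_expandedCol h.subset_Icc h.one_le x

lemma exists_expandedCol_eq (h : IsRowExpansion K' L K p A q) (hm : m ∈ Icc 1 K)
    (hqm : q m ≠ none) : ∃ x ∈ Icc 1 K', p x ≠ none ∧ expandedCol L A x = m := by
  have hmU : m ∉ Uset L A := fun hU => hqm ((h.eq_none_iff m hm).2 hU)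
  have : m ∈ (Icc 1 K' \ A).image (expandedCol L A) := by
    rw [image_expandedCol h.subset_Icc h.one_le, ← h.card_eq]
    exact mem_sdiff.2 ⟨hm, hmU⟩
  obtain ⟨x, hx, rfl⟩ := mem_image.1 this
  obtain ⟨hxK, hxA⟩ := mem_sdiff.1 hx
  exact ⟨x, hxK, fun hpx => hxA (h.stars_eq ▸ mem_filter.2 ⟨hxK, hpx⟩), rfl⟩

lemma mem_Icc_of_eq_some {S : ℕ} (h : IsRowExpansion K' L K p A q)
    (hp : ∀ x ∈ Icc 1 K', ∀ s, p x = some s → s ∈ Icc 1 S) (hm : m ∈ Icc 1 K)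
    (hqm : q m = some s) : s ∈ Icc 1 S := by
  obtain ⟨x, hx, hpx, rfl⟩ := h.exists_expandedCol_eq hm (by simp [hqm])
  exact hp x hx s (h.apply_expandedCol hx hpx ▸ hqm)

lemma card_filter_eq_none (h : IsRowExpansion K' L K p A q) :
    ((Icc 1 K).filter fun m => q m = none).card = A.card * L := by
  rw [← card_Uset h.one_le]
  congr 1
  ext m
  rw [mem_filter]
  refine ⟨fun hm => (h.eq_none_iff m hm.1).1 hm.2, fun hm => ?_⟩
  have hmK : m ∈ Icc 1 K := h.card_eq ▸ Uset_subset_Icc h.subset_Icc hm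
  exact ⟨hmK, (h.eq_none_iff m hmK).2 hm⟩

end IsRowExpansion

lemma cross_of_forall_isRowExpansion {F' K' L K : ℕ} {P Q : Fin F' → ℕ → Option ℕ}
    {A : Fin F' → Finset ℕ} (hE : ∀ j, IsRowExpansion K' L K (P j) (A j) (Q j))
    (hC3 : ∀ j1 j2 : Fin F', ∀ k1 ∈ Icc 1 K', ∀ k2 ∈ Icc 1 K',
      (j1, k1) ≠ (j2, k2) → P j1 k1 = P j2 k2 → P j1 k1 ≠ none → j1 ≠ j2)
    (hC5 : ∀ j1 j2 : Fin F', ∀ k1 ∈ Icc 1 K', ∀ k2 ∈ Icc 1 K',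
      (j1, k1) ≠ (j2, k2) → P j1 k1 = P j2 k2 → P j1 k1 ≠ none →
      k1 + (rankIn (insert k1 (A j1)) k1 - 1) * (L - 1) ∈ Uset L (A j2) ∧
      k2 + (rankIn (insert k2 (A j2)) k2 - 1) * (L - 1) ∈ Uset L (A j1))
    (j1 j2 : Fin F') (m1 : ℕ) (hm1 : m1 ∈ Icc 1 K) (m2 : ℕ) (hm2 : m2 ∈ Icc 1 K)
    (hne : (j1, m1) ≠ (j2, m2)) (heq : Q j1 m1 = Q j2 m2) (hsome : Q j1 m1 ≠ none) :
    j1 ≠ j2 ∧ m1 ≠ m2 ∧ Q j1 m2 = none ∧ Q j2 m1 = none := by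
  obtain ⟨x1, hx1, hP1, rfl⟩ := (hE j1).exists_expandedCol_eq hm1 hsome
  obtain ⟨x2, hx2, hP2, rfl⟩ := (hE j2).exists_expandedCol_eq hm2 (heq ▸ hsome)
  rw [(hE j1).apply_expandedCol hx1 hP1] at heq hsome
  rw [(hE j2).apply_expandedCol hx2 hP2] at heq
  have hx : (j1, x1) ≠ (j2, x2) := by rintro ⟨⟩; exact hne rfl
  have hU := hC5 j1 j2 x1 hx1 x2 hx2 hx heq hsome
  rw [expandedCol_eq ((hE j1).notMem_of_ne_none hP1),
    expandedCol_eq ((hE j2).notMem_of_ne_none hP2)] at hU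
  have hQ21 := ((hE j2).eq_none_iff _ hm1).2 hU.1
  refine ⟨hC3 j1 j2 x1 hx1 x2 hx2 hx heq hsome, fun h => ?_, ((hE j1).eq_none_iff _ hm2).2 hU.2,
    hQ21⟩
  rw [h, (hE j2).apply_expandedCol hx2 hP2] at hQ21
  exact hP2 hQ21

end MultiaccessPDA

open MultiaccessPDA

theorem stmt_12_general (K' F' S t L K : ℕ)
    (hL : 1 ≤ L) (hK : K = K' + t * (L - 1))
    (P : Fin F' → ℕ → Option ℕ)
    (hPent : ∀ j, ∀ k ∈ Finset.Icc 1 K', ∀ s, P j k = some s → s ∈ Finset.Icc 1 S)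
    (hC2 : ∀ s ∈ Finset.Icc 1 S, ∃ j : Fin F', ∃ k ∈ Finset.Icc 1 K', P j k = some s)
    (hC3 : ∀ j1 j2 : Fin F', ∀ k1 ∈ Finset.Icc 1 K', ∀ k2 ∈ Finset.Icc 1 K',
      (j1, k1) ≠ (j2, k2) → P j1 k1 = P j2 k2 → P j1 k1 ≠ none →
      j1 ≠ j2 ∧ k1 ≠ k2 ∧ P j1 k2 = none ∧ P j2 k1 = none)
    (A : Fin F' → Finset ℕ)
    (hA : ∀ j, A j = (Finset.Icc 1 K').filter (fun k => P j k = none))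
    (hC4 : ∀ j, (A j).card = t)
    (hC5 : ∀ j1 j2 : Fin F', ∀ k1 ∈ Finset.Icc 1 K', ∀ k2 ∈ Finset.Icc 1 K',
      (j1, k1) ≠ (j2, k2) → P j1 k1 = P j2 k2 → P j1 k1 ≠ none →
      k1 + (rankIn (insert k1 (A j1)) k1 - 1) * (L - 1) ∈ Uset L (A j2) ∧
      k2 + (rankIn (insert k2 (A j2)) k2 - 1) * (L - 1) ∈ Uset L (A j1))
    (Q : Fin F' → ℕ → Option ℕ)
    (hQstar : ∀ j, ∀ k ∈ Finset.Icc 1 K, (Q j k = none ↔ k ∈ Uset L (A j)))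
    (hQint : ∀ j, ∀ k ∈ Finset.Icc 1 K, k ∉ Uset L (A j) →
      ∀ k' ∈ Finset.Icc 1 K', P j k' ≠ none →
      rankIn ((Finset.Icc 1 K) \ Uset L (A j)) k
        = rankIn ((Finset.Icc 1 K').filter (fun c => P j c ≠ none)) k' →
      Q j k = P j k')
    -- Q̂ : the row (g,j) of the stacked array, g ∈ {1,…,K}
    (Qhat : ℕ → Fin F' → ℕ → Option ℕ)
    (hQhat : ∀ g : ℕ, ∀ j : Fin F', ∀ k : ℕ,
      Qhat g j k = Option.map (fun s => s + (g - 1) * S)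
        (Q j (natMod1 ((k : ℤ) - (g : ℤ) + 1) K))) :
    -- Q̂ is a (K, K·F', t·L·F', K·S) PDA:
    -- entries lie in {*} ∪ {1,…,K·S}
    (∀ g ∈ Finset.Icc 1 K, ∀ j : Fin F', ∀ k ∈ Finset.Icc 1 K, ∀ s,
      Qhat g j k = some s → s ∈ Finset.Icc 1 (K * S)) ∧
    -- C1: each of the K columns contains exactly t·L·F' stars
    (∀ k ∈ Finset.Icc 1 K,
      (((Finset.Icc 1 K) ×ˢ (Finset.univ : Finset (Fin F'))).filter
        (fun p => Qhat p.1 p.2 k = none)).card = t * L * F') ∧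
    -- C2: every integer of {1,…,K·S} occurs at least once
    (∀ s ∈ Finset.Icc 1 (K * S), ∃ g ∈ Finset.Icc 1 K, ∃ j : Fin F',
      ∃ k ∈ Finset.Icc 1 K, Qhat g j k = some s) ∧
    -- C3
    (∀ g1 ∈ Finset.Icc 1 K, ∀ g2 ∈ Finset.Icc 1 K, ∀ j1 j2 : Fin F',
      ∀ k1 ∈ Finset.Icc 1 K, ∀ k2 ∈ Finset.Icc 1 K,
      ((g1, j1), k1) ≠ ((g2, j2), k2) → Qhat g1 j1 k1 = Qhat g2 j2 k2 →
      Qhat g1 j1 k1 ≠ none →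
      (g1, j1) ≠ (g2, j2) ∧ k1 ≠ k2 ∧ Qhat g1 j1 k2 = none ∧ Qhat g2 j2 k1 = none) := by
  have hE : ∀ j, IsRowExpansion K' L K (P j) (A j) (Q j) := fun j =>
    ⟨hA j, by rw [hC4, hK], hL, hQstar j, hQint j⟩
  obtain rfl : Qhat = cyclicStack S K Q := by
    funext g j k
    exact hQhat g j k
  have hQent : ∀ j, ∀ m ∈ Finset.Icc 1 K, ∀ s, Q j m = some s → s ∈ Finset.Icc 1 S :=
    fun j m hm s => (hE j).mem_Icc_of_eq_some (hPent j) hm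
  refine ⟨fun g hg j k _ s => cyclicStack_mem_Icc hQent hg, fun k _ => ?_, fun s hs => ?_,
    fun g1 hg1 g2 hg2 j1 j2 k1 hk1 k2 hk2 => cyclicStack_cross hQent
      (cross_of_forall_isRowExpansion hE (fun j1 j2 k1 hk1 k2 hk2 hne heq hsome =>
        (hC3 j1 j2 k1 hk1 k2 hk2 hne heq hsome).1) hC5) hg1 hg2 hk1 hk2⟩
  · exact card_filter_cyclicStack_eq_none (fun j => by rw [(hE j).card_filter_eq_none, hC4]) k
  · refine exists_cyclicStack_eq_some (fun s₀ hs₀ => ?_) hs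
    obtain ⟨j, x, hx, hPx⟩ := hC2 s₀ hs₀
    exact ⟨j, _, (hE j).expandedCol_mem_Icc hx,
      hPx ▸ (hE j).apply_expandedCol hx (by simp [hPx])⟩

/-- Let `P` be a `(K',F',Z,S)` PDA satisfying C4 (every row has exactly
`t = K'Z/F'` stars) and C5 (w.r.t. `t` and `L ≥ 1`), and let `K = K' + t(L−1)`.
Let `Q` be the `F' × K` user-delivery array built from `P` (stars exactly on
`U_j = Uset L (A j)` in row `j`, nulls filled rank-by-rank with the integer entries of
row `j` of `P`).  For `g ∈ {1,…,K}` let `Q^{(g)}(j,k) = Q(j, Mod(k−g+1,K))` with every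
integer entry `s` relabeled as `s + (g−1)S`, and let `Q̂` be the vertical stack of
`Q^{(1)},…,Q^{(K)}` (rows indexed by pairs `(g,j)`).  Then `Q̂` is a
`(K, KF', tLF', KS)` PDA. -/
theorem stmt_12 (K' F' Z S t L K : ℕ)
    (ht : 1 ≤ t) (hL : 1 ≤ L) (hK : K = K' + t * (L - 1))
    (htZ : t * F' = K' * Z)
    (P : Fin F' → ℕ → Option ℕ)
    (hPent : ∀ j, ∀ k ∈ Finset.Icc 1 K', ∀ s, P j k = some s → s ∈ Finset.Icc 1 S)
    (hC1 : ∀ k ∈ Finset.Icc 1 K',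
      ((Finset.univ : Finset (Fin F')).filter (fun j => P j k = none)).card = Z)
    (hC2 : ∀ s ∈ Finset.Icc 1 S, ∃ j : Fin F', ∃ k ∈ Finset.Icc 1 K', P j k = some s)
    (hC3 : ∀ j1 j2 : Fin F', ∀ k1 ∈ Finset.Icc 1 K', ∀ k2 ∈ Finset.Icc 1 K',
      (j1, k1) ≠ (j2, k2) → P j1 k1 = P j2 k2 → P j1 k1 ≠ none →
      j1 ≠ j2 ∧ k1 ≠ k2 ∧ P j1 k2 = none ∧ P j2 k1 = none)
    (A : Fin F' → Finset ℕ)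
    (hA : ∀ j, A j = (Finset.Icc 1 K').filter (fun k => P j k = none))
    (hC4 : ∀ j, (A j).card = t)
    (hC5 : ∀ j1 j2 : Fin F', ∀ k1 ∈ Finset.Icc 1 K', ∀ k2 ∈ Finset.Icc 1 K',
      (j1, k1) ≠ (j2, k2) → P j1 k1 = P j2 k2 → P j1 k1 ≠ none →
      k1 + (rankIn (insert k1 (A j1)) k1 - 1) * (L - 1) ∈ Uset L (A j2) ∧
      k2 + (rankIn (insert k2 (A j2)) k2 - 1) * (L - 1) ∈ Uset L (A j1))
    (Q : Fin F' → ℕ → Option ℕ)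
    (hQstar : ∀ j, ∀ k ∈ Finset.Icc 1 K, (Q j k = none ↔ k ∈ Uset L (A j)))
    (hQint : ∀ j, ∀ k ∈ Finset.Icc 1 K, k ∉ Uset L (A j) →
      ∀ k' ∈ Finset.Icc 1 K', P j k' ≠ none →
      rankIn ((Finset.Icc 1 K) \ Uset L (A j)) k
        = rankIn ((Finset.Icc 1 K').filter (fun c => P j c ≠ none)) k' →
      Q j k = P j k')
    -- Q̂ : the row (g,j) of the stacked array, g ∈ {1,…,K}
    (Qhat : ℕ → Fin F' → ℕ → Option ℕ)
    (hQhat : ∀ g : ℕ, ∀ j : Fin F', ∀ k : ℕ,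
      Qhat g j k = Option.map (fun s => s + (g - 1) * S)
        (Q j (natMod1 ((k : ℤ) - (g : ℤ) + 1) K))) :
    -- Q̂ is a (K, K·F', t·L·F', K·S) PDA:
    -- entries lie in {*} ∪ {1,…,K·S}
    (∀ g ∈ Finset.Icc 1 K, ∀ j : Fin F', ∀ k ∈ Finset.Icc 1 K, ∀ s,
      Qhat g j k = some s → s ∈ Finset.Icc 1 (K * S)) ∧
    -- C1: each of the K columns contains exactly t·L·F' stars
    (∀ k ∈ Finset.Icc 1 K,
      (((Finset.Icc 1 K) ×ˢ (Finset.univ : Finset (Fin F'))).filter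
        (fun p => Qhat p.1 p.2 k = none)).card = t * L * F') ∧
    -- C2: every integer of {1,…,K·S} occurs at least once
    (∀ s ∈ Finset.Icc 1 (K * S), ∃ g ∈ Finset.Icc 1 K, ∃ j : Fin F',
      ∃ k ∈ Finset.Icc 1 K, Qhat g j k = some s) ∧
    -- C3
    (∀ g1 ∈ Finset.Icc 1 K, ∀ g2 ∈ Finset.Icc 1 K, ∀ j1 j2 : Fin F',
      ∀ k1 ∈ Finset.Icc 1 K, ∀ k2 ∈ Finset.Icc 1 K,
      ((g1, j1), k1) ≠ ((g2, j2), k2) → Qhat g1 j1 k1 = Qhat g2 j2 k2 →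
      Qhat g1 j1 k1 ≠ none →
      (g1, j1) ≠ (g2, j2) ∧ k1 ≠ k2 ∧ Qhat g1 j1 k2 = none ∧ Qhat g2 j2 k1 = none) :=
  stmt_12_general K' F' S t L K hL hK P hPent hC2 hC3 A hA hC4 hC5 Q hQstar hQint Qhat hQhat
end
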